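/- The Cayley transform g ↦ g₀ g g₀⁻¹, where g₀ = (1/√2)·[[1,i],[i,1]], maps SU(1,1;ℤ[i]) isomorphically onto the theta group Γ_θ = {[[a,b],[c,d]] ∈ SL(2,ℤ) : ab ≡ cd ≡ 0 (mod 2)}. -/
import Mathlib


open Matrix

/-- The hermitian form `H = diag(1,-1)`, as a complex matrix. -/
noncomputable def Hc : Matrix (Fin 2) (Fin 2) ℂ := !![1, 0; 0, -1]

/-- A complex matrix has Gaussian integer entries. -/
def GaussEntries (g : Matrix (Fin 2) (Fin 2) ℂ) : Prop :=
  ∀ i j, ∃ a b : ℤ, g i j = (a : ℂ) + (b : ℂ) * Complex.I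

/-- `SU(1,1;ℤ[i])`: determinant-one Gaussian integer matrices preserving `H`. -/
def SU11Z : Set (Matrix (Fin 2) (Fin 2) ℂ) :=
  {g | gᴴ * Hc * g = Hc ∧ g.det = 1 ∧ GaussEntries g}

/-- The theta group `Γ_θ ⊂ SL(2,ℤ)`, viewed as a set of complex matrices. -/
def ThetaGroup : Set (Matrix (Fin 2) (Fin 2) ℂ) :=
  {m | ∃ a b c d : ℤ, m = !![(a : ℂ), (b : ℂ); (c : ℂ), (d : ℂ)] ∧
    a * d - b * c = 1 ∧ 2 ∣ a * b ∧ 2 ∣ c * d}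

/-- The Cayley element `g₀ = (1/√2)·[[1,i],[i,1]]`. -/
noncomputable def g0 : Matrix (Fin 2) (Fin 2) ℂ :=
  ((Real.sqrt 2 : ℂ))⁻¹ • !![1, Complex.I; Complex.I, 1]

lemma sqrt2_sq : ((Real.sqrt 2 : ℝ) : ℂ) * ((Real.sqrt 2 : ℝ) : ℂ) = 2 := by
  have : Real.sqrt 2 * Real.sqrt 2 = 2 := Real.mul_self_sqrt (by norm_num)
  exact_mod_cast this

/-- Explicit inverse of `g0`. -/
noncomputable def g0i : Matrix (Fin 2) (Fin 2) ℂ :=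
  ((Real.sqrt 2 : ℂ))⁻¹ • !![1, -Complex.I; -Complex.I, 1]

lemma hg0i : g0 * g0i = 1 := by
  rw [g0, g0i, smul_mul_smul_comm, ← Complex.ofReal_one, ← mul_inv, sqrt2_sq]
  ext i j
  fin_cases i <;> fin_cases j <;>
    simp [Matrix.mul_apply, Fin.sum_univ_two, Matrix.one_apply] <;> ring_nf

lemma hig0 : g0i * g0 = 1 := by
  rw [g0, g0i, smul_mul_smul_comm, ← Complex.ofReal_one, ← mul_inv, sqrt2_sq]
  ext i j
  fin_cases i <;> fin_cases j <;>
    simp [Matrix.mul_apply, Fin.sum_univ_two, Matrix.one_apply] <;> ring_nf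

lemma g0_inv : g0⁻¹ = g0i := Matrix.inv_eq_right_inv hg0i

/-- The conjugation formula. -/
lemma cayley_key (a b c d : ℂ) : g0 * !![a,b;c,d] * g0⁻¹ =
    (2:ℂ)⁻¹ • !![a+d+(c-b)*Complex.I, b+c+(d-a)*Complex.I;
                 b+c+(a-d)*Complex.I, a+d+(b-c)*Complex.I] := by
  rw [g0_inv, g0, g0i]
  simp only [Matrix.smul_mul, Matrix.mul_smul, smul_smul]
  rw [← mul_inv, sqrt2_sq]
  congr 1
  ext i j
  fin_cases i <;> fin_cases j <;>
    simp [Matrix.mul_apply, Fin.sum_univ_two] <;> ring_nf <;> rw [Complex.I_sq] <;> ring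

/-- Structure of elements of `SU(1,1)`. -/
lemma su_struct (g : Matrix (Fin 2) (Fin 2) ℂ) (h1 : gᴴ * Hc * g = Hc) (hd : g.det = 1) :
    g 1 1 = starRingEnd ℂ (g 0 0) ∧ g 0 1 = starRingEnd ℂ (g 1 0) := by
  have E1 := congrFun (congrFun h1 0) 0
  have E2 := congrFun (congrFun h1 0) 1
  simp [Hc, Matrix.mul_apply, Fin.sum_univ_two, Matrix.conjTranspose_apply] at E1 E2
  rw [Matrix.det_fin_two] at hd
  constructor
  · linear_combination (-(g 1 1))*E1 + (starRingEnd ℂ) (g 0 0)*hd + (g 1 0)*E2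
  · linear_combination (-(g 0 1))*E1 + (starRingEnd ℂ) (g 1 0)*hd + (g 0 0)*E2

lemma zmod_parity1 : ∀ P Q R S : ZMod 2,
    P^2+Q^2-R^2-S^2 = 1 → (P-S)*(Q+R)=0 ∧ (R-Q)*(P+S)=0 := by decide

lemma zmod_parity2 : ∀ A B C D : ZMod 2,
    A*D - B*C = 1 → A*B = 0 → C*D = 0 → A = D ∧ B = C := by decide

lemma cancel_conj (m : Matrix (Fin 2) (Fin 2) ℂ) : g0i * (g0 * m * g0⁻¹) * g0 = m := by
  rw [g0_inv]
  simp only [Matrix.mul_assoc]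
  rw [hig0, Matrix.mul_one, ← Matrix.mul_assoc, hig0, Matrix.one_mul]

/-- The Cayley transform `g ↦ g₀ g g₀⁻¹` maps `SU(1,1;ℤ[i])` isomorphically onto the
theta group `Γ_θ`: it is a bijection onto `Γ_θ` and is multiplicative. -/
theorem cayley_transform_iso :
    Set.BijOn (fun g => g0 * g * g0⁻¹) SU11Z ThetaGroup ∧
    (∀ g ∈ SU11Z, ∀ h ∈ SU11Z,
      g0 * (g * h) * g0⁻¹ = (g0 * g * g0⁻¹) * (g0 * h * g0⁻¹)) := by
  refine ⟨⟨?mapsto, ?inj, ?surj⟩, ?mul⟩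
  case mapsto =>
    rintro g ⟨hH, hdet, hGauss⟩
    obtain ⟨p, q, hpq⟩ := hGauss 0 0
    obtain ⟨r, s, hrs⟩ := hGauss 1 0
    obtain ⟨h11, h01⟩ := su_struct g hH hdet
    have hg11 : g 1 1 = (p:ℂ) - (q:ℂ)*Complex.I := by
      rw [h11, hpq]; simp [map_add, _root_.map_mul, Complex.conj_I]; ring
    have hg01 : g 0 1 = (r:ℂ) - (s:ℂ)*Complex.I := by
      rw [h01, hrs]; simp [map_add, _root_.map_mul, Complex.conj_I]; ring
    have heta : g = !![(p:ℂ)+(q:ℂ)*Complex.I, (r:ℂ)-(s:ℂ)*Complex.I;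
                       (r:ℂ)+(s:ℂ)*Complex.I, (p:ℂ)-(q:ℂ)*Complex.I] := by
      rw [Matrix.eta_fin_two g, hpq, hrs, hg01, hg11]
    have hdZ : p^2+q^2-r^2-s^2 = 1 := by
      have hc : ((p^2+q^2-r^2-s^2 : ℤ):ℂ) = ((1:ℤ):ℂ) := by
        rw [heta, Matrix.det_fin_two_of] at hdet
        push_cast
        linear_combination hdet + ((q:ℂ)^2-(s:ℂ)^2)*Complex.I_sq
      exact_mod_cast hc
    have hz2 : ((p:ZMod 2)^2+(q:ZMod 2)^2-(r:ZMod 2)^2-(s:ZMod 2)^2 = 1) := by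
      have := congrArg (Int.cast : ℤ → ZMod 2) hdZ
      push_cast at this
      exact this
    obtain ⟨hpar1, hpar2⟩ := zmod_parity1 _ _ _ _ hz2
    refine ⟨p-s, q+r, r-q, p+s, ?_, by ring_nf; linarith [hdZ], ?_, ?_⟩
    · show g0 * g * g0⁻¹ = _
      rw [heta, cayley_key]
      ext i j
      fin_cases i <;> fin_cases j <;> simp [Matrix.smul_apply] <;> push_cast
      · linear_combination (s:ℂ)*Complex.I_sq
      · linear_combination (-(q:ℂ))*Complex.I_sq
      · linear_combination (q:ℂ)*Complex.I_sq
      · linear_combination (-(s:ℂ))*Complex.I_sq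
    · have hz : (((p-s)*(q+r) : ℤ) : ZMod 2) = 0 := by push_cast; linear_combination hpar1
      exact_mod_cast (ZMod.intCast_zmod_eq_zero_iff_dvd _ 2).mp hz
    · have hz : (((r-q)*(p+s) : ℤ) : ZMod 2) = 0 := by push_cast; linear_combination hpar2
      exact_mod_cast (ZMod.intCast_zmod_eq_zero_iff_dvd _ 2).mp hz
  case inj =>
    intro g _ h _ heq
    simp only at heq
    have := congrArg (fun m => g0i * m * g0) heq
    simpa only [cancel_conj] using this
  case surj =>
    rintro m ⟨A, B, C, D, hmeq, hdet, hab, hcd⟩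
    have hAD : (A : ZMod 2) = (D : ZMod 2) ∧ (B : ZMod 2) = (C : ZMod 2) := by
      refine zmod_parity2 _ _ _ _ ?_ ?_ ?_
      · have := congrArg (Int.cast : ℤ → ZMod 2) hdet; push_cast at this; exact this
      · have h1 : ((A*B : ℤ) : ZMod 2) = 0 :=
          (ZMod.intCast_zmod_eq_zero_iff_dvd _ 2).mpr (by exact_mod_cast hab)
        push_cast at h1; exact h1
      · have h1 : ((C*D : ℤ) : ZMod 2) = 0 :=
          (ZMod.intCast_zmod_eq_zero_iff_dvd _ 2).mpr (by exact_mod_cast hcd)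
        push_cast at h1; exact h1
    obtain ⟨s, hs⟩ : (2:ℤ) ∣ D - A := by
      have : ((D - A : ℤ) : ZMod 2) = 0 := by push_cast; rw [hAD.1]; ring
      exact_mod_cast (ZMod.intCast_zmod_eq_zero_iff_dvd _ 2).mp this
    obtain ⟨q, hq⟩ : (2:ℤ) ∣ B - C := by
      have : ((B - C : ℤ) : ZMod 2) = 0 := by push_cast; rw [hAD.2]; ring
      exact_mod_cast (ZMod.intCast_zmod_eq_zero_iff_dvd _ 2).mp this
    have hD : D = A + 2*s := by linarith
    have hB : B = C + 2*q := by linarith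
    subst hD hB
    refine ⟨!![((A+s:ℤ):ℂ)+((q:ℤ):ℂ)*Complex.I, ((C+q:ℤ):ℂ)-((s:ℤ):ℂ)*Complex.I;
               ((C+q:ℤ):ℂ)+((s:ℤ):ℂ)*Complex.I, ((A+s:ℤ):ℂ)-((q:ℤ):ℂ)*Complex.I],
            ⟨?_, ?_, ?_⟩, ?_⟩
    · have hdetC : ((A:ℂ))*((A:ℂ)+2*(s:ℂ)) - ((C:ℂ)+2*(q:ℂ))*((C:ℂ)) = 1 := by
        exact_mod_cast hdet
      ext i j
      fin_cases i <;> fin_cases j <;>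
        simp [Hc, Matrix.mul_apply, Fin.sum_univ_two, Matrix.conjTranspose_apply,
          map_add, map_sub, _root_.map_mul, Complex.conj_I] <;> push_cast
      · linear_combination hdetC + ((s:ℂ)^2-(q:ℂ)^2)*Complex.I_sq
      · ring
      · ring
      · linear_combination -hdetC + ((q:ℂ)^2-(s:ℂ)^2)*Complex.I_sq
    · have hdetC : ((A:ℂ))*((A:ℂ)+2*(s:ℂ)) - ((C:ℂ)+2*(q:ℂ))*((C:ℂ)) = 1 := by
        exact_mod_cast hdet
      rw [Matrix.det_fin_two_of]
      push_cast
      linear_combination hdetC + ((s:ℂ)^2-(q:ℂ)^2)*Complex.I_sq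
    · intro i j
      fin_cases i <;> fin_cases j
      · exact ⟨A+s, q, by simp <;> push_cast <;> ring⟩
      · exact ⟨C+q, -s, by simp <;> push_cast <;> ring⟩
      · exact ⟨C+q, s, by simp <;> push_cast <;> ring⟩
      · exact ⟨A+s, -q, by simp <;> push_cast <;> ring⟩
    · show g0 * _ * g0⁻¹ = m
      rw [cayley_key, hmeq]
      ext i j
      fin_cases i <;> fin_cases j <;> simp [Matrix.smul_apply] <;> push_cast
      · linear_combination (s:ℂ)*Complex.I_sq
      · linear_combination (-(q:ℂ))*Complex.I_sq
      · linear_combination (q:ℂ)*Complex.I_sq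
      · linear_combination (-(s:ℂ))*Complex.I_sq
  case mul =>
    intro g _ h _
    rw [g0_inv]
    simp only [Matrix.mul_assoc]
    rw [show g0i * (g0 * (h * g0i)) = h * g0i from by
      rw [← Matrix.mul_assoc, hig0, Matrix.one_mul]]
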